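/- Let α > -1/2 and 0 < s < 1, and define K_s(x,w) = (2/(π Γ(α+1))) · ∫_0^∞ ∫_0^∞ cos(λw) · (λ / sinh(tλ))^{α+s+2} · e^{-(λ/2) coth(tλ) x²} dλ dt for x > 0 and w ∈ ℝ. Then K_s is homogeneous in the sense that for every x > 0 and w ∈ ℝ, K_s(x, w x²) = x^{-2(α+s+2)} · K_s(1, w). -/
import Mathlib


open Real MeasureTheory

/-- The kernel `K_s(x,w) = (2/(πΓ(α+1))) ∫_0^∞ ∫_0^∞ cos(λw)(λ/sinh(tλ))^{α+s+2}
e^{-(λ/2)coth(tλ)x²} dλ dt`, from the proof of Proposition 2.10. -/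
noncomputable def Ks (α s x w : ℝ) : ℝ :=
  (2 / (π * Real.Gamma (α + 1))) *
    ∫ t in Set.Ioi (0 : ℝ), ∫ lam in Set.Ioi (0 : ℝ),
      Real.cos (lam * w) * (lam / Real.sinh (t * lam)) ^ (α + s + 2) *
        Real.exp (-(lam / 2) * (Real.cosh (t * lam) / Real.sinh (t * lam)) * x ^ 2)

/-- Homogeneity of the kernel `K_s` (equation (2.46) in the proof of Proposition 2.10):
`K_s(x, wx²) = x^{-2(α+s+2)} K_s(1, w)` for all `x > 0`, `w ∈ ℝ`. -/
theorem Ks_homogeneous (α s : ℝ) (hα : -1/2 < α) (hs0 : 0 < s) (hs1 : s < 1) :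
    ∀ x w : ℝ, 0 < x →
      Ks α s x (w * x ^ 2) = x ^ (-(2 : ℝ) * (α + s + 2)) * Ks α s 1 w := by
  intro x w hx
  set p := α + s + 2 with hp
  have hc : (0 : ℝ) < x ^ 2 := by positivity
  set c := x ^ 2 with hcdef
  have hcne : c ≠ 0 := hc.ne'
  -- the inner integrand for the `x = 1` kernel
  set g1 : ℝ → ℝ → ℝ := fun t lam =>
    Real.cos (lam * w) * (lam / Real.sinh (t * lam)) ^ p *
      Real.exp (-(lam / 2) * (Real.cosh (t * lam) / Real.sinh (t * lam)) * (1 : ℝ) ^ 2)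
    with hg1
  -- key inner change of variables
  have key : ∀ t : ℝ, t ∈ Set.Ioi (0:ℝ) →
      (∫ lam in Set.Ioi (0 : ℝ),
        Real.cos (lam * (w * c)) * (lam / Real.sinh (t * lam)) ^ p *
          Real.exp (-(lam / 2) * (Real.cosh (t * lam) / Real.sinh (t * lam)) * c))
      = c⁻¹ * (c ^ (-p) * ∫ lam in Set.Ioi (0 : ℝ), g1 (c⁻¹ * t) lam) := by
    intro t ht
    rw [Set.mem_Ioi] at ht
    have h1 : (∫ lam in Set.Ioi (0 : ℝ),
        Real.cos (lam * (w * c)) * (lam / Real.sinh (t * lam)) ^ p *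
          Real.exp (-(lam / 2) * (Real.cosh (t * lam) / Real.sinh (t * lam)) * c))
        = ∫ lam in Set.Ioi (0 : ℝ), c ^ (-p) * g1 (c⁻¹ * t) (c * lam) := by
      apply setIntegral_congr_fun measurableSet_Ioi
      intro lam hlam
      rw [Set.mem_Ioi] at hlam
      have hsinh : 0 < Real.sinh (t * lam) := Real.sinh_pos_iff.mpr (mul_pos ht hlam)
      have harg : c⁻¹ * t * (c * lam) = t * lam := by field_simp
      simp only [hg1, harg]
      have hsplit : (c * lam / Real.sinh (t * lam)) ^ p
          = c ^ p * (lam / Real.sinh (t * lam)) ^ p := by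
        rw [mul_div_assoc, Real.mul_rpow hc.le (by positivity)]
      rw [hsplit]
      have hcp : c ^ (-p) * c ^ p = 1 := by
        rw [← Real.rpow_add hc]; simp
      have hcos : Real.cos (lam * (w * c)) = Real.cos (c * lam * w) := by ring_nf
      have hexp : Real.exp (-(lam / 2) * (Real.cosh (t * lam) / Real.sinh (t * lam)) * c)
          = Real.exp (-(c * lam / 2) * (Real.cosh (t * lam) / Real.sinh (t * lam)) * (1:ℝ) ^ 2) := by
        congr 1; ring
      rw [hcos, hexp]
      linear_combination (-(Real.cos (c * lam * w) * (lam / Real.sinh (t * lam)) ^ p *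
        Real.exp (-(c * lam / 2) * (Real.cosh (t * lam) / Real.sinh (t * lam)) * (1:ℝ) ^ 2))) * hcp
    rw [h1, MeasureTheory.integral_const_mul]
    have h2 := MeasureTheory.integral_comp_mul_left_Ioi (g1 (c⁻¹ * t)) 0 hc
    rw [mul_zero] at h2
    rw [h2, smul_eq_mul]
    ring
  -- rewrite the outer integral
  have outer : (∫ t in Set.Ioi (0 : ℝ), ∫ lam in Set.Ioi (0 : ℝ),
        Real.cos (lam * (w * c)) * (lam / Real.sinh (t * lam)) ^ p *
          Real.exp (-(lam / 2) * (Real.cosh (t * lam) / Real.sinh (t * lam)) * c))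
      = c ^ (-p) * ∫ t in Set.Ioi (0 : ℝ), ∫ lam in Set.Ioi (0 : ℝ), g1 t lam := by
    rw [setIntegral_congr_fun measurableSet_Ioi key]
    rw [MeasureTheory.integral_const_mul]
    have h3 := MeasureTheory.integral_comp_mul_left_Ioi
      (fun t => c ^ (-p) * ∫ lam in Set.Ioi (0 : ℝ), g1 t lam) 0 (inv_pos.mpr hc)
    rw [mul_zero, inv_inv, smul_eq_mul] at h3
    rw [h3, inv_mul_cancel_left₀ hcne, MeasureTheory.integral_const_mul]
  have hxp : x ^ (-(2 : ℝ) * p) = c ^ (-p) := by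
    rw [hcdef, ← Real.rpow_natCast x 2, ← Real.rpow_mul hx.le]
    norm_num
  unfold Ks
  rw [outer, hxp]
  ring
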